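/- arXiv:0810.2105 — 8 statements merged into one kernel-verified Lean document; each statement's English description precedes it below -/
import Mathlib

section
/- Let f be a probability density function with support S on a standard discrete poset (S, ⪯), and let α > 0. Then f has constant rate α if and only if for every function g : S → [0,∞], ∑_{x∈S} (Lg)(x) · f(x) = (1/α) · ∑_{x∈S} g(x) · f(x), where both sides are evaluated in [0,∞]. -/
open scoped ENNReal NNReal

/-- The upper probability function (UPF) of a density `f` on a discrete poset:
`F x = ∑_{t ⪰ x} f t`, computed in `[0,∞]`. -/
noncomputable def upf {S : Type*} [PartialOrder S] (f : S → ℝ≥0) (x : S) : ℝ≥0∞ :=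
  ∑' t : {t : S // x ≤ t}, (f t : ℝ≥0∞)

/-- The lower operator `L` on functions `g : S → [0,∞]`:
`(L g) x = ∑' t ∈ D[x], g t`. -/
noncomputable def lowerOp {S : Type*} [PartialOrder S] (g : S → ℝ≥0∞) : S → ℝ≥0∞ :=
  fun x => ∑' t : {t : S // t ≤ x}, g t

open Classical in
lemma key_fubini {S : Type*} [PartialOrder S] (f : S → ℝ≥0) (g : S → ℝ≥0∞) :
    ∑' x : S, lowerOp g x * (f x : ℝ≥0∞) = ∑' t : S, g t * upf f t := by
  have h1 : ∀ x : S, lowerOp g x * (f x : ℝ≥0∞)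
      = ∑' t : S, (if t ≤ x then g t * (f x : ℝ≥0∞) else 0) := by
    intro x
    rw [lowerOp,
      show (∑' t : {t : S // t ≤ x}, g t)
        = ∑' t : S, Set.indicator {t : S | t ≤ x} g t from tsum_subtype _ _,
      ← ENNReal.tsum_mul_right]
    congr 1; ext t
    by_cases h : t ≤ x <;> simp [Set.indicator, h]
  have h2 : ∀ t : S, g t * upf f t
      = ∑' x : S, (if t ≤ x then g t * (f x : ℝ≥0∞) else 0) := by
    intro t
    rw [upf,
      show (∑' x : {x : S // t ≤ x}, ((f x : ℝ≥0∞)))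
        = ∑' x : S, Set.indicator {x : S | t ≤ x} (fun x => (f x : ℝ≥0∞)) x from
        tsum_subtype {x : S | t ≤ x} (fun x => (f x : ℝ≥0∞)),
      ← ENNReal.tsum_mul_left]
    congr 1; ext x
    by_cases h : t ≤ x <;> simp [Set.indicator, h]
  simp only [h1, h2]
  exact ENNReal.tsum_comm

open Classical in
/-- A PDF `f` with support `S` on a standard discrete poset has
constant rate `α` if and only if `∑_x (L g)(x) f(x) = (1/α) ∑_x g(x) f(x)` for every
`g : S → [0,∞]`, both sides evaluated in `[0,∞]`. -/
theorem constantRate_iff_moment_identity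
    {S : Type*} [Countable S] [PartialOrder S]
    (hfin : ∀ x : S, {t : S | t ≤ x}.Finite)
    (f : S → ℝ≥0)
    (hsupp : ∀ x : S, 0 < f x)
    (hpdf : ∑' x : S, (f x : ℝ≥0∞) = 1)
    (α : ℝ) (hα : 0 < α) :
    (∀ x : S, (f x : ℝ≥0∞) = ENNReal.ofReal α * upf f x)
    ↔
    (∀ g : S → ℝ≥0∞,
      ∑' x : S, lowerOp g x * (f x : ℝ≥0∞)
        = ENNReal.ofReal (1 / α) * ∑' x : S, g x * (f x : ℝ≥0∞)) := by
  have hmul : ENNReal.ofReal (1 / α) * ENNReal.ofReal α = 1 := by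
    rw [← ENNReal.ofReal_mul (by positivity), one_div, inv_mul_cancel₀ hα.ne',
      ENNReal.ofReal_one]
  constructor
  · intro h g
    rw [key_fubini]
    have hup : ∀ t : S, upf f t = ENNReal.ofReal (1 / α) * (f t : ℝ≥0∞) := by
      intro t
      rw [h t, ← mul_assoc, hmul, one_mul]
    calc ∑' t : S, g t * upf f t
        = ∑' t : S, ENNReal.ofReal (1 / α) * (g t * (f t : ℝ≥0∞)) := by
          congr 1; ext t; rw [hup t]; ring
      _ = ENNReal.ofReal (1 / α) * ∑' t : S, g t * (f t : ℝ≥0∞) :=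
          ENNReal.tsum_mul_left
  · intro h x₀
    have hx := h (fun t => if t = x₀ then (1 : ℝ≥0∞) else 0)
    rw [key_fubini] at hx
    have l1 : ∑' t : S, (if t = x₀ then (1 : ℝ≥0∞) else 0) * upf f t = upf f x₀ := by
      rw [show (fun t : S => (if t = x₀ then (1 : ℝ≥0∞) else 0) * upf f t)
          = fun t : S => if t = x₀ then upf f x₀ else 0 by
        ext t; by_cases ht : t = x₀ <;> simp [ht]]
      exact tsum_ite_eq x₀ _
    have l2 : ∑' t : S, (if t = x₀ then (1 : ℝ≥0∞) else 0) * (f t : ℝ≥0∞)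
        = (f x₀ : ℝ≥0∞) := by
      rw [show (fun t : S => (if t = x₀ then (1 : ℝ≥0∞) else 0) * (f t : ℝ≥0∞))
          = fun t : S => if t = x₀ then (f x₀ : ℝ≥0∞) else 0 by
        ext t; by_cases ht : t = x₀ <;> simp [ht]]
      exact tsum_ite_eq x₀ _
    rw [l1, l2] at hx
    rw [hx, ← mul_assoc, mul_comm (ENNReal.ofReal α), hmul, one_mul]
end

section
/- Let f be a probability density function with support S on a standard discrete poset (S, ⪯) having constant rate α. Then for every n ∈ ℕ, ∑_{x∈S} λ_n(x) f(x) = α^{-n}, where λ_n is the cumulative function of order n. In particular, ∑_{x∈S} #(D[x]) f(x) = 1/α. -/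
/-!
Write `λ_{n+1}(x) f(x) = ∑_{t ⪯ x} λ_n(t) f(x)` and exchange the two sums (legitimate in `[0,∞]`):
`∑_x λ_{n+1}(x) f(x) = ∑_t λ_n(t) F(t)`. Constant rate means `F = α⁻¹ f`, so each step multiplies
the sum by `α⁻¹`, starting from `∑_x f(x) = 1`. For `n = 1`, `λ_1(x) = #D[x]`.
-/

open scoped ENNReal NNReal

/-- The cumulative functions `λ_n` on a discrete poset: `λ_0 = 1` and
`λ_{n+1}(x) = ∑_{t ⪯ x} λ_n(t)`. -/
noncomputable def cumul {S : Type*} [PartialOrder S] : ℕ → S → ℝ≥0∞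
  | 0 => fun _ => 1
  | (n + 1) => fun x => ∑' t : {t : S // t ≤ x}, cumul n t

theorem cumul_orderIso_apply {S T : Type*} [PartialOrder S] [PartialOrder T] (e : S ≃o T)
    (n : ℕ) (x : S) : cumul n (e x) = cumul n x := by
  induction n generalizing S T with
  | zero => rfl
  | succ n ih =>
    let d : {s : S // s ≤ x} ≃o {t : T // t ≤ e x} :=
      ⟨e.toEquiv.subtypeEquiv fun _ => e.le_iff_le.symm, e.le_iff_le⟩
    exact (d.toEquiv.tsum_eq (cumul n)).symm.trans (tsum_congr fun s => ih d s)

/-- The recursive call in `cumul` evaluates `λ_n` on the poset `D[x]`, not on `S`; on a lower set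
the two agree. -/
theorem cumul_subtype_apply {S : Type*} [PartialOrder S] {p : S → Prop}
    (hp : IsLowerSet {x | p x}) (n : ℕ) (x : {x // p x}) : cumul n x = cumul n (x : S) := by
  cases n with
  | zero => rfl
  | succ n =>
    let d : {t : {x // p x} // t ≤ x} ≃o {t : S // t ≤ x} :=
      { toFun t := ⟨t.1, t.2⟩
        invFun t := ⟨⟨t.1, hp t.2 x.2⟩, t.2⟩
        map_rel_iff' := Iff.rfl }
    exact (tsum_congr fun t => (cumul_orderIso_apply d n t).symm).trans
      (d.toEquiv.tsum_eq (cumul n))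

theorem cumul_succ_apply {S : Type*} [PartialOrder S] (n : ℕ) (x : S) :
    cumul (n + 1) x = ∑' t : {t : S // t ≤ x}, cumul n (t : S) :=
  tsum_congr fun t => cumul_subtype_apply (p := (· ≤ x)) (fun _ _ hab hb => hab.trans hb) n t

theorem ENNReal.tsum_tsum_le_mul_eq_tsum_mul_tsum_ge {S : Type*} [LE S] (g h : S → ℝ≥0∞) :
    ∑' x, (∑' t : {t : S // t ≤ x}, g t) * h x = ∑' t, g t * ∑' x : {x : S // t ≤ x}, h x := by
  calc ∑' x, (∑' t : {t : S // t ≤ x}, g t) * h x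
      = ∑' x, ∑' t, {t | t ≤ x}.indicator (fun t => g t * h x) t := by
        refine tsum_congr fun x => ?_
        rw [← ENNReal.tsum_mul_right]
        exact tsum_subtype {t | t ≤ x} fun t => g t * h x
    _ = ∑' t, ∑' x, {x | t ≤ x}.indicator (fun x => g t * h x) x := ENNReal.tsum_comm
    _ = ∑' t, g t * ∑' x : {x : S // t ≤ x}, h x := by
        refine tsum_congr fun t => ?_
        rw [← ENNReal.tsum_mul_left]
        exact (tsum_subtype {x | t ≤ x} fun x => g t * h x).symm

theorem cumul_one_eq_natCard {S : Type*} [PartialOrder S] {x : S} (hx : {t : S | t ≤ x}.Finite) :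
    cumul 1 x = Nat.card {t : S // t ≤ x} := by
  have : Finite {t : S // t ≤ x} := hx
  simp [cumul, ENat.card_eq_coe_natCard]

theorem tsum_cumul_succ_mul {S : Type*} [PartialOrder S] (n : ℕ) (h : S → ℝ≥0∞) :
    ∑' x, cumul (n + 1) x * h x = ∑' t, cumul n t * ∑' x : {x : S // t ≤ x}, h x := by
  simp only [cumul_succ_apply]
  exact ENNReal.tsum_tsum_le_mul_eq_tsum_mul_tsum_ge (cumul n) h

theorem tsum_cumul_mul_eq_pow {S : Type*} [PartialOrder S] {f : S → ℝ≥0} {c : ℝ≥0∞}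
    (hf : ∑' x, (f x : ℝ≥0∞) = 1) (hupf : ∀ x, upf f x = c * f x) (n : ℕ) :
    ∑' x, cumul n x * f x = c ^ n := by
  induction n with
  | zero => simpa [cumul] using hf
  | succ n ih =>
    calc ∑' x, cumul (n + 1) x * f x = ∑' t, cumul n t * upf f t := tsum_cumul_succ_mul n _
      _ = c * ∑' t, cumul n t * f t := by
        simp_rw [hupf, mul_left_comm _ c]
        exact ENNReal.tsum_mul_left
      _ = c ^ (n + 1) := by rw [ih, pow_succ']

theorem tsum_cumul_mul_eq_inv_pow_of_constantRate_general
    {S : Type*} [PartialOrder S]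
    (hfin : ∀ x : S, {t : S | t ≤ x}.Finite)
    (f : S → ℝ≥0)
    (hpdf : ∑' x : S, (f x : ℝ≥0∞) = 1)
    (α : ℝ) (hα : 0 < α)
    (hrate : ∀ x : S, (f x : ℝ≥0∞) = ENNReal.ofReal α * upf f x) :
    (∀ n : ℕ, ∑' x : S, cumul n x * (f x : ℝ≥0∞) = (ENNReal.ofReal α)⁻¹ ^ n) ∧
    (∑' x : S, (Nat.card {t : S // t ≤ x} : ℝ≥0∞) * (f x : ℝ≥0∞)
      = (ENNReal.ofReal α)⁻¹) := by
  have hupf (x : S) : upf f x = (ENNReal.ofReal α)⁻¹ * f x := by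
    rw [hrate x, ← mul_assoc, ENNReal.inv_mul_cancel (ENNReal.ofReal_pos.2 hα).ne'
      ENNReal.ofReal_ne_top, one_mul]
  have hpow := tsum_cumul_mul_eq_pow hpdf hupf
  refine ⟨hpow, ?_⟩
  rw [← pow_one (ENNReal.ofReal α)⁻¹, ← hpow 1]
  exact tsum_congr fun x => by rw [cumul_one_eq_natCard (hfin x)]

/-- If a PDF `f` with support `S` on a standard discrete poset has
constant rate `α`, then `∑_x λ_n(x) f(x) = α⁻ⁿ` for every `n`; in particular
`∑_x #(D[x]) f(x) = 1/α`. -/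
theorem tsum_cumul_mul_eq_inv_pow_of_constantRate
    {S : Type*} [Countable S] [PartialOrder S]
    (hfin : ∀ x : S, {t : S | t ≤ x}.Finite)
    (f : S → ℝ≥0)
    (hsupp : ∀ x : S, 0 < f x)
    (hpdf : ∑' x : S, (f x : ℝ≥0∞) = 1)
    (α : ℝ) (hα : 0 < α)
    (hrate : ∀ x : S, (f x : ℝ≥0∞) = ENNReal.ofReal α * upf f x) :
    (∀ n : ℕ, ∑' x : S, cumul n x * (f x : ℝ≥0∞) = (ENNReal.ofReal α)⁻¹ ^ n) ∧
    (∑' x : S, (Nat.card {t : S // t ≤ x} : ℝ≥0∞) * (f x : ℝ≥0∞)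
      = (ENNReal.ofReal α)⁻¹) :=
  tsum_cumul_mul_eq_inv_pow_of_constantRate_general hfin f hpdf α hα hrate
end

section
/- Let (S, ·, e) be a countable left-cancellative monoid with no nontrivial invertible elements (x·y = e implies x = e), ordered by x ⪯ y iff x·t = y for some t ∈ S, and suppose D[x] = {t : t ⪯ x} is finite for every x. Let f be a PDF on S with support S and UPF F. If f(x·u) = F(x)·f(u) for all x, u ∈ S (i.e. the ladder-variable chain and the partial-product chain of an IID sequence with PDF f have the same transition densities), then f(x) = f(e)·F(x) for all x ∈ S (so f has constant rate α = f(e)) and F(x·u) = F(x)·F(u) for all x, u ∈ S (so the distribution is exponential). -/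
open scoped ENNReal NNReal

/-- Let `S` be a countable left-cancellative monoid with no nontrivial
invertible elements, ordered by `x ⪯ y ↔ ∃ t, x * t = y`, with all down-sets finite.
If a PDF `f` with support `S` and UPF `F` satisfies `f (x * u) = F x * f u` for all
`x, u` (equivalence of the ladder-variable and partial-product chains), then
`f x = f 1 * F x` for all `x` (constant rate `α = f e`) and `F (x * u) = F x * F u`
for all `x, u` (the distribution is exponential). -/
theorem exponential_of_ladder_eq_product
    {S : Type*} [Monoid S] [Countable S]
    (hcancel : ∀ a b c : S, a * b = a * c → b = c)
    (hnoinv : ∀ x y : S, x * y = 1 → x = 1)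
    (pre : S → S → Prop)
    (hpre : ∀ x y : S, pre x y ↔ ∃ t : S, x * t = y)
    (hfin : ∀ x : S, {t : S | pre t x}.Finite)
    (f : S → ℝ≥0)
    (hsupp : ∀ x : S, 0 < f x)
    (hpdf : ∑' x : S, (f x : ℝ≥0∞) = 1)
    (F : S → ℝ≥0∞)
    (hF : ∀ x : S, F x = ∑' y : {y : S // pre x y}, (f y : ℝ≥0∞))
    (hprod : ∀ x u : S, (f (x * u) : ℝ≥0∞) = F x * (f u : ℝ≥0∞)) :
    (∀ x : S, (f x : ℝ≥0∞) = (f 1 : ℝ≥0∞) * F x) ∧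
    (∀ x u : S, F (x * u) = F x * F u) := by
  have key : ∀ x : S, F x = ∑' t : S, (f (x * t) : ℝ≥0∞) := by
    intro x
    have hb : Function.Bijective
        (fun t : S => (⟨x * t, (hpre x (x * t)).2 ⟨t, rfl⟩⟩ : {y : S // pre x y})) := by
      constructor
      · intro a b hab
        exact hcancel x a b (congrArg Subtype.val hab)
      · rintro ⟨y, hy⟩
        obtain ⟨t, ht⟩ := (hpre x y).1 hy
        exact ⟨t, Subtype.ext ht⟩
    rw [hF x, ← (Equiv.ofBijective _ hb).tsum_eq (fun y : {y : S // pre x y} => (f y : ℝ≥0∞))]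
    rfl
  refine ⟨fun x => ?_, fun x u => ?_⟩
  · have := hprod x 1
    rw [mul_one] at this
    rw [this, mul_comm]
  · calc F (x * u) = ∑' t : S, (f (x * u * t) : ℝ≥0∞) := key _
      _ = ∑' t : S, F x * (f (u * t) : ℝ≥0∞) := by
          refine tsum_congr fun t => ?_
          rw [mul_assoc, hprod]
      _ = F x * ∑' t : S, (f (u * t) : ℝ≥0∞) := ENNReal.tsum_mul_left
      _ = F x * F u := by rw [← key]
end

section
/- Let (S, ⪯) be a rooted tree and F : S → (0, 1]. Then F is the upper probability function of a probability density function on S (with support S) if and only if: (1) F(e) = 1; (2) F(x) > ∑_{y ∈ A(x)} F(y) for every x ∈ S; and (3) ∑_{x ∈ A_n} F(x) → 0 as n → ∞. -/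
/-!
The subtree above `x` is `x` together with the disjoint subtrees above the children of `x`, so
every UPF satisfies `F x = f x + ∑_{y ∈ A(x)} F y`, and the sum of `F` over the level `A_n` is
the mass `f` puts on depths `≥ n`, a tail of a convergent series. Conversely, put
`f = F - ∑_{y ∈ A(x)} F y`; unfolding the recursion down to level `N` gives
`F x = ∑_{t ⪰ x, d(t) < N} f t + ∑_{t ⪰ x, d(t) = N} F t`, and the last sum is bounded by the
level sum `∑_{A_N} F`, which tends to `0`.
-/

open scoped ENNReal NNReal
open Filter

/-- The depth of a node in a rooted tree (a locally finite poset with minimum in which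
every down-set is a chain): `d x = #(D[x]) − 1`. -/
noncomputable def depth {S : Type*} [PartialOrder S] (x : S) : ℕ :=
  Nat.card {t : S // t ≤ x} - 1

section Depth

variable {S : Type*} [PartialOrder S]

lemma ncard_Iic_eq_depth_add_one {x : S} (hx : (Set.Iic x).Finite) :
    (Set.Iic x).ncard = depth x + 1 := by
  have hpos : 0 < (Set.Iic x).ncard := (Set.ncard_pos hx).2 Set.nonempty_Iic
  rw [depth, ← Nat.card_coe_set_eq] at *
  exact (Nat.sub_add_cancel hpos).symm

lemma depth_strictMono (hfin : ∀ x : S, (Set.Iic x).Finite) : StrictMono (depth : S → ℕ) :=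
  fun x y hxy => by
    have h := Set.ncard_lt_ncard (Set.Iic_ssubset_Iic.2 hxy) (hfin y)
    rwa [ncard_Iic_eq_depth_add_one (hfin x), ncard_Iic_eq_depth_add_one (hfin y),
      Nat.add_lt_add_iff_right] at h

lemma covBy_of_le_of_depth_eq (hfin : ∀ x : S, (Set.Iic x).Finite) {x y : S} (hxy : x ≤ y)
    (hd : depth y = depth x + 1) : x ⋖ y := by
  have hmono := depth_strictMono hfin
  refine ⟨hxy.lt_of_ne (by rintro rfl; omega), fun z hxz hzy => ?_⟩
  have := hmono hxz
  have := hmono hzy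
  omega

end Depth

structure IsTreeOrder (S : Type*) [PartialOrder S] : Prop where
  finite_Iic : ∀ x : S, (Set.Iic x).Finite
  isChain_Iic : ∀ x : S, IsChain (· ≤ ·) (Set.Iic x)

namespace IsTreeOrder

variable {S : Type*} [PartialOrder S] (hS : IsTreeOrder S)
include hS

lemma eq_of_le_of_le_of_depth_eq {x y t : S} (hx : x ≤ t) (hy : y ≤ t)
    (h : depth x = depth y) : x = y := by
  have hmono := depth_strictMono hS.finite_Iic
  rcases (hS.isChain_Iic t).total hx hy with hxy | hyx
  · exact hxy.eq_of_not_lt fun hlt => (hmono hlt).ne h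
  · exact (hyx.eq_of_not_lt fun hlt => (hmono hlt).ne h.symm).symm

lemma exists_le_depth_eq {t : S} {n : ℕ} (hn : n ≤ depth t) : ∃ y ≤ t, depth y = n := by
  classical
  have hsurj : Set.SurjOn depth ((hS.finite_Iic t).toFinset : Set S)
      (Finset.range (depth t + 1)) := by
    refine Finset.surjOn_of_injOn_of_card_le depth (fun y hy => ?_) (fun y hy z hz => ?_) ?_
    · simpa [Nat.lt_succ_iff] using (depth_strictMono hS.finite_Iic).monotone (by simpa using hy)
    · simp only [Set.Finite.coe_toFinset] at hy hz
      exact hS.eq_of_le_of_le_of_depth_eq hy hz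
    · rw [Finset.card_range, ← Set.ncard_eq_toFinset_card _ (hS.finite_Iic t),
        ncard_Iic_eq_depth_add_one (hS.finite_Iic t)]
  obtain ⟨y, hy, rfl⟩ := hsurj (Finset.mem_range.2 (Nat.lt_succ_of_le hn))
  exact ⟨y, by simpa using hy, rfl⟩

lemma existsUnique_depth_eq_le {t : S} {n : ℕ} (hn : n ≤ depth t) :
    ∃! y, depth y = n ∧ y ≤ t := by
  obtain ⟨y, hyt, hy⟩ := hS.exists_le_depth_eq hn
  exact ⟨y, ⟨hy, hyt⟩, fun z ⟨hz, hzt⟩ =>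
    hS.eq_of_le_of_le_of_depth_eq hzt hyt (hz.trans hy.symm)⟩

lemma depth_eq_add_one_of_covBy {x y : S} (hxy : x ⋖ y) : depth y = depth x + 1 := by
  have hmono := depth_strictMono hS.finite_Iic
  refine le_antisymm ?_ (hmono hxy.lt)
  by_contra! hlt
  obtain ⟨z, hzy, hz⟩ := hS.exists_le_depth_eq hlt.le
  rcases (hS.isChain_Iic y).total hxy.le hzy with hxz | hzx
  · exact hxy.2 (hxz.lt_of_ne (by rintro rfl; omega)) (hzy.lt_of_ne (by rintro rfl; omega))
  · have := hmono.monotone hzx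
    omega

lemma existsUnique_covBy_le {x t : S} (hxt : x < t) : ∃! y, x ⋖ y ∧ y ≤ t := by
  have hmono := depth_strictMono hS.finite_Iic
  obtain ⟨y, ⟨hy, hyt⟩, huniq⟩ := hS.existsUnique_depth_eq_le (hmono hxt)
  have hxy : x ≤ y := ((hS.isChain_Iic t).total hxt.le hyt).resolve_right fun hyx => by
    have := hmono.monotone hyx
    omega
  exact ⟨y, ⟨covBy_of_le_of_depth_eq hS.finite_Iic hxy hy, hyt⟩,
    fun z ⟨hz, hzt⟩ => huniq z ⟨hS.depth_eq_add_one_of_covBy hz, hzt⟩⟩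

end IsTreeOrder

section TailSums

variable {α : Type*}

lemma tendsto_tsum_indicator_lt_atTop (d : α → ℕ) (g : α → ℝ≥0∞) :
    Tendsto (fun N => ∑' a, {a | d a < N}.indicator g a) atTop (nhds (∑' a, g a)) := by
  have hmono : Monotone fun N => ∑' a, {a | d a < N}.indicator g a := fun M N hMN =>
    ENNReal.tsum_le_tsum fun a => Set.indicator_le_indicator_of_subset
      (fun a (ha : d a < M) => ha.trans_le hMN) (fun _ => zero_le) a
  convert tendsto_atTop_iSup hmono
  refine le_antisymm ?_ (iSup_le fun N => ENNReal.tsum_le_tsum fun a => Set.indicator_le_self _ _ a)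
  rw [ENNReal.tsum_eq_iSup_sum]
  refine iSup_le fun s => le_iSup_of_le (s.sup d + 1) ?_
  calc ∑ a ∈ s, g a = ∑ a ∈ s, {a | d a < s.sup d + 1}.indicator g a :=
        Finset.sum_congr rfl fun a ha =>
          (Set.indicator_of_mem (s := {a | d a < s.sup d + 1})
            (Nat.lt_succ_of_le (Finset.le_sup ha)) g).symm
    _ ≤ _ := ENNReal.sum_le_tsum s

lemma tendsto_tsum_tail_atTop_zero (d : α → ℕ) {g : α → ℝ≥0∞} (hg : ∑' a, g a ≠ ∞) :
    Tendsto (fun n => ∑' a : {a // n ≤ d a}, g a) atTop (nhds 0) := by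
  rw [ENNReal.tendsto_atTop_zero]
  intro ε hε
  obtain ⟨s, hs⟩ := ((ENNReal.tendsto_tsum_compl_atTop_zero hg).eventually (gt_mem_nhds hε)).exists
  refine ⟨s.sup d + 1, fun n hn => le_trans ?_ hs.le⟩
  refine ENNReal.tsum_mono_subtype g fun a (ha : n ≤ d a) has => ?_
  have := Finset.le_sup (f := d) has
  omega

end TailSums

section UpperSum

variable {S : Type*}

noncomputable def upperSum [Preorder S] (g : S → ℝ≥0∞) (x : S) : ℝ≥0∞ :=
  ∑' t : {t : S // x ≤ t}, g t

noncomputable def childSum [Preorder S] (g : S → ℝ≥0∞) (x : S) : ℝ≥0∞ :=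
  ∑' y : {y : S // x ⋖ y}, g y

lemma tsum_eq_tsum_upperSum [Preorder S] {p q : S → Prop}
    (hpq : ∀ y t, p y → y ≤ t → q t) (hq : ∀ t, q t → ∃! y, p y ∧ y ≤ t) (g : S → ℝ≥0∞) :
    ∑' t : {t // q t}, g t = ∑' y : {y // p y}, upperSum g y := by
  let e : (Σ y : {y // p y}, {t // (y : S) ≤ t}) → {t // q t} :=
    fun c => ⟨c.2, hpq c.1 c.2 c.1.2 c.2.2⟩
  have he : e.Bijective := by
    refine ⟨?_, fun t => ?_⟩
    · rintro ⟨y, t, hyt⟩ ⟨y', t', hyt'⟩ h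
      obtain rfl : t = t' := congrArg Subtype.val h
      obtain rfl : y = y' := Subtype.ext <|
        (hq t (hpq y t y.2 hyt)).unique ⟨y.2, hyt⟩ ⟨y'.2, hyt'⟩
      rfl
    · obtain ⟨y, ⟨hy, hyt⟩, -⟩ := hq t t.2
      exact ⟨⟨⟨y, hy⟩, t, hyt⟩, rfl⟩
  rw [← (Equiv.ofBijective e he).tsum_eq]
  exact ENNReal.tsum_sigma' fun c : Σ y : {y // p y}, {t // (y : S) ≤ t} => g c.2

lemma upperSum_eq_add_tsum_lt [PartialOrder S] (g : S → ℝ≥0∞) (x : S) :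
    upperSum g x = g x + ∑' t : {t // x < t}, g t := by
  have h := ENNReal.summable.tsum_union_disjoint (f := g) (s := Set.Ioi x)
    (Set.disjoint_singleton_right.2 (lt_irrefl x)) ENNReal.summable
  rw [Set.Ioi_union_left, tsum_singleton, add_comm] at h
  exact h

lemma upperSum_bot [Preorder S] [OrderBot S] (g : S → ℝ≥0∞) : upperSum g ⊥ = ∑' t, g t :=
  (Equiv.subtypeUnivEquiv fun _ => bot_le).tsum_eq g

variable [PartialOrder S] (hS : IsTreeOrder S)
include hS

lemma IsTreeOrder.upperSum_eq_add_childSum (g : S → ℝ≥0∞) (x : S) :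
    upperSum g x = g x + childSum (upperSum g) x := by
  rw [upperSum_eq_add_tsum_lt, tsum_eq_tsum_upperSum (fun y t hy hyt => hy.lt.trans_le hyt)
    fun t ht => hS.existsUnique_covBy_le ht]
  rfl

lemma IsTreeOrder.tsum_upperSum_depth_eq (g : S → ℝ≥0∞) (n : ℕ) :
    ∑' x : {x : S // depth x = n}, upperSum g x = ∑' t : {t : S // n ≤ depth t}, g t :=
  (tsum_eq_tsum_upperSum
    (fun y _ (hy : depth y = n) hyt => hy ▸ (depth_strictMono hS.finite_Iic).monotone hyt)
    (fun _ ht => hS.existsUnique_depth_eq_le ht) g).symm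

end UpperSum

section Reconstruction

variable {S : Type*}

lemma upperSum_indicator_eq_zero [Preorder S] {s : Set S} {x : S} (h : ∀ t, x ≤ t → t ∉ s)
    (g : S → ℝ≥0∞) : upperSum (s.indicator g) x = 0 :=
  ENNReal.tsum_eq_zero.2 fun t => Set.indicator_of_notMem (h t t.2) g

variable [PartialOrder S] (hS : IsTreeOrder S)
include hS

lemma IsTreeOrder.eq_upperSum_indicator_add_upperSum_indicator {G : S → ℝ≥0∞}
    (hG : ∀ x, childSum G x ≤ G x) {N : ℕ} {x : S} (hx : depth x ≤ N) :
    G x = upperSum ({t | depth t < N}.indicator (G - childSum G)) x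
      + upperSum ({t | depth t = N}.indicator G) x := by
  have hmono := depth_strictMono hS.finite_Iic
  obtain ⟨k, hk⟩ := Nat.exists_eq_add_of_le hx
  induction k generalizing x with
  | zero =>
    have hchild (s : Set S) (g : S → ℝ≥0∞) (hs : ∀ t ∈ s, depth t ≤ N) :
        childSum (upperSum (s.indicator g)) x = 0 :=
      ENNReal.tsum_eq_zero.2 fun y => upperSum_indicator_eq_zero (fun t hyt hts => by
        have := hs t hts
        have := hmono.monotone hyt
        have := hS.depth_eq_add_one_of_covBy y.2
        omega) g
    rw [hS.upperSum_eq_add_childSum, hS.upperSum_eq_add_childSum, hchild _ _ fun t ht => ht.le,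
      hchild _ _ fun t ht => ht.le, Set.indicator_of_notMem (by simp [hk]),
      Set.indicator_of_mem (by simp [hk])]
    simp
  | succ k ih =>
    have hchildren : childSum (upperSum ({t | depth t < N}.indicator (G - childSum G))) x
        + childSum (upperSum ({t | depth t = N}.indicator G)) x = childSum G x := by
      rw [childSum, childSum, ← ENNReal.tsum_add]
      refine tsum_congr fun y => (ih ?_ ?_).symm <;>
      · have := hS.depth_eq_add_one_of_covBy y.2
        omega
    rw [hS.upperSum_eq_add_childSum, hS.upperSum_eq_add_childSum,
      Set.indicator_of_mem (by simp [hk]), Set.indicator_of_notMem (by simp [hk]), zero_add,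
      add_assoc, hchildren, Pi.sub_apply, tsub_add_cancel_of_le (hG x)]

lemma IsTreeOrder.upperSum_sub_childSum {G : S → ℝ≥0∞} (hG : ∀ x, childSum G x ≤ G x)
    (hlim : Tendsto (fun n => ∑' x : {x : S // depth x = n}, G x) atTop (nhds 0)) (x : S) :
    upperSum (G - childSum G) x = G x := by
  have htrunc : Tendsto (fun N => upperSum ({t | depth t < N}.indicator (G - childSum G)) x)
      atTop (nhds (upperSum (G - childSum G) x)) :=
    tendsto_tsum_indicator_lt_atTop (fun t : {t // x ≤ t} => depth (t : S))
      (fun t => (G - childSum G) t)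
  have hlevel : Tendsto (fun N => upperSum ({t | depth t = N}.indicator G) x) atTop (nhds 0) := by
    refine tendsto_of_tendsto_of_tendsto_of_le_of_le tendsto_const_nhds hlim (fun _ => zero_le)
      fun N => ?_
    calc upperSum ({t | depth t = N}.indicator G) x ≤ ∑' t, {t | depth t = N}.indicator G t :=
          ENNReal.tsum_comp_le_tsum_of_injective Subtype.val_injective _
      _ = ∑' t : {t : S // depth t = N}, G t := (tsum_subtype _ _).symm
  refine tendsto_nhds_unique (by simpa using htrunc.add hlevel) (tendsto_const_nhds.congr' ?_)
  filter_upwards [eventually_ge_atTop (depth x)] with N hN using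
    hS.eq_upperSum_indicator_add_upperSum_indicator hG hN

end Reconstruction

theorem tree_upf_characterization_general
    {S : Type*} [PartialOrder S] [OrderBot S]
    (hfin : ∀ x : S, {t : S | t ≤ x}.Finite)
    (htree : ∀ x a b : S, a ≤ x → b ≤ x → a ≤ b ∨ b ≤ a)
    (F : S → ℝ) :
    (∃ f : S → ℝ≥0, (∀ x : S, 0 < f x) ∧ (∑' x : S, (f x : ℝ≥0∞) = 1) ∧
      ∀ x : S, ENNReal.ofReal (F x) = ∑' t : {t : S // x ≤ t}, (f t : ℝ≥0∞))
    ↔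
    (F ⊥ = 1 ∧
     (∀ x : S, ∑' y : {y : S // x ⋖ y}, ENNReal.ofReal (F y) < ENNReal.ofReal (F x)) ∧
     Tendsto (fun n : ℕ => ∑' x : {x : S // depth x = n}, ENNReal.ofReal (F x))
       atTop (nhds 0)) := by
  have hS : IsTreeOrder S := ⟨hfin, fun x a ha b hb _ => htree x a b ha hb⟩
  set G : S → ℝ≥0∞ := fun x => ENNReal.ofReal (F x)
  constructor
  · rintro ⟨f, hf_pos, hf_sum, hF⟩
    have hG : G = upperSum (fun t => (f t : ℝ≥0∞)) := funext hF
    refine ⟨?_, fun x => ?_, ?_⟩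
    · rw [← ENNReal.ofReal_eq_one, hF, ← hf_sum]
      exact upperSum_bot (fun t => (f t : ℝ≥0∞))
    · have hx : G x = f x + childSum G x := by
        rw [hG]
        exact hS.upperSum_eq_add_childSum _ x
      change childSum G x < G x
      rw [hx, add_comm]
      exact ENNReal.lt_add_right (ne_top_of_le_ne_top ENNReal.ofReal_ne_top (hx ▸ le_add_self))
        (by exact_mod_cast (hf_pos x).ne')
    · change Tendsto (fun n => ∑' x : {x : S // depth x = n}, G x) atTop (nhds 0)
      simp_rw [hG, hS.tsum_upperSum_depth_eq]
      exact tendsto_tsum_tail_atTop_zero depth (hf_sum ▸ ENNReal.one_ne_top)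
  · rintro ⟨h_root, h_child, h_lim⟩
    have hU := hS.upperSum_sub_childSum (fun x => (h_child x).le) h_lim
    have hf_ne_top (t : S) : G t - childSum G t ≠ ∞ :=
      ne_top_of_le_ne_top ENNReal.ofReal_ne_top tsub_le_self
    refine ⟨fun t => (G t - childSum G t).toNNReal,
      fun t => ENNReal.toNNReal_pos (tsub_pos_of_lt (h_child t)).ne' (hf_ne_top t), ?_, fun x => ?_⟩
    · simp_rw [ENNReal.coe_toNNReal (hf_ne_top _)]
      rw [← upperSum_bot]
      exact (hU ⊥).trans (by simp [h_root])
    · simp_rw [ENNReal.coe_toNNReal (hf_ne_top _)]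
      exact (hU x).symm

/-- Let `(S, ⪯)` be a rooted tree (a countable poset with minimum `e`,
finite totally ordered down-sets). A function `F : S → (0,1]` is the UPF of a PDF on `S`
(with support `S`) iff `F(e) = 1`, `F(x) > ∑_{y ∈ A(x)} F(y)` for every `x` (where
`A(x)` is the set of children of `x`), and `∑_{x ∈ A_n} F(x) → 0` as `n → ∞` (where
`A_n` is the set of nodes of depth `n`). -/
theorem tree_upf_characterization
    {S : Type*} [Countable S] [PartialOrder S] [OrderBot S]
    (hfin : ∀ x : S, {t : S | t ≤ x}.Finite)
    (htree : ∀ x a b : S, a ≤ x → b ≤ x → a ≤ b ∨ b ≤ a)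
    (F : S → ℝ) (hF0 : ∀ x : S, 0 < F x) (hF1 : ∀ x : S, F x ≤ 1) :
    (∃ f : S → ℝ≥0, (∀ x : S, 0 < f x) ∧ (∑' x : S, (f x : ℝ≥0∞) = 1) ∧
      ∀ x : S, ENNReal.ofReal (F x) = ∑' t : {t : S // x ≤ t}, (f t : ℝ≥0∞))
    ↔
    (F ⊥ = 1 ∧
     (∀ x : S, ∑' y : {y : S // x ⋖ y}, ENNReal.ofReal (F y) < ENNReal.ofReal (F x)) ∧
     Tendsto (fun n : ℕ => ∑' x : {x : S // depth x = n}, ENNReal.ofReal (F x))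
       atTop (nhds 0)) :=
  tree_upf_characterization_general hfin htree F
end

section
/- Let (S, ⪯_S) and (T, ⪯_T) be standard discrete posets, let f be a PDF on S with support S and let g be a PDF on T with support T. Then the product PDF h(x, y) = f(x)·g(y) on the product poset S × T (ordered coordinatewise) has constant rate if and only if f and g each have constant rate; and if f has constant rate α and g has constant rate β, then h has constant rate αβ. -/
open scoped ENNReal NNReal

def prodUpEquiv {S : Type*} [PartialOrder S] {T : Type*} [PartialOrder T] (x : S) (y : T) :
    ({a : S // x ≤ a} × {b : T // y ≤ b}) ≃ {t : S × T // (x, y) ≤ t} where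
  toFun p := ⟨(p.1.1, p.2.1), ⟨p.1.2, p.2.2⟩⟩
  invFun t := (⟨t.1.1, (Prod.le_def.mp t.2).1⟩, ⟨t.1.2, (Prod.le_def.mp t.2).2⟩)
  left_inv p := rfl
  right_inv t := rfl

lemma upf_prod_eq {S : Type*} [PartialOrder S] {T : Type*} [PartialOrder T]
    (f : S → ℝ≥0) (g : T → ℝ≥0) (z : S × T) :
    upf (fun w : S × T => f w.1 * g w.2) z = upf f z.1 * upf g z.2 := by
  obtain ⟨x, y⟩ := z
  have e := prodUpEquiv (S := S) (T := T) x y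
  have h1 : upf (fun w : S × T => f w.1 * g w.2) (x, y)
      = ∑' c : {a : S // x ≤ a} × {b : T // y ≤ b}, ((f c.1.1 : ℝ≥0∞) * (g c.2.1 : ℝ≥0∞)) := by
    rw [upf, ← Equiv.tsum_eq (prodUpEquiv x y) (fun t : {t : S × T // (x, y) ≤ t} =>
        ((f t.1.1 * g t.1.2 : ℝ≥0) : ℝ≥0∞))]
    exact tsum_congr fun c => by push_cast; rfl
  rw [h1, ENNReal.tsum_prod']
  rw [upf, upf, ← ENNReal.tsum_mul_right]
  exact tsum_congr fun a =>
    show ∑' b : {b : T // y ≤ b}, (f a.val : ℝ≥0∞) * (g b.val : ℝ≥0∞) = _ from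
      ENNReal.tsum_mul_left

lemma upf_le_one' {S : Type*} [PartialOrder S] (f : S → ℝ≥0)
    (hf : ∑' x : S, (f x : ℝ≥0∞) = 1) (x : S) : upf f x ≤ 1 := by
  rw [← hf]
  exact ENNReal.tsum_comp_le_tsum_of_injective Subtype.val_injective _

lemma le_upf {S : Type*} [PartialOrder S] (f : S → ℝ≥0) (x : S) :
    (f x : ℝ≥0∞) ≤ upf f x :=
  ENNReal.le_tsum (⟨x, le_rfl⟩ : {t : S // x ≤ t})

/-- Let `f`, `g` be PDFs with full support on standard discrete posets
`S`, `T`. The product PDF `h(x,y) = f(x) g(y)` on the coordinatewise-ordered product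
poset `S × T` has constant rate iff both `f` and `g` have constant rate; and if `f` has
constant rate `α` and `g` has constant rate `β`, then `h` has constant rate `α β`. -/
theorem product_constantRate
    {S : Type*} [Countable S] [PartialOrder S]
    (hfinS : ∀ x : S, {t : S | t ≤ x}.Finite)
    {T : Type*} [Countable T] [PartialOrder T]
    (hfinT : ∀ y : T, {t : T | t ≤ y}.Finite)
    (f : S → ℝ≥0) (hfsupp : ∀ x : S, 0 < f x) (hfpdf : ∑' x : S, (f x : ℝ≥0∞) = 1)
    (g : T → ℝ≥0) (hgsupp : ∀ y : T, 0 < g y) (hgpdf : ∑' y : T, (g y : ℝ≥0∞) = 1) :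
    ((∃ γ : ℝ, 0 < γ ∧ ∀ z : S × T,
        ((f z.1 * g z.2 : ℝ≥0) : ℝ≥0∞)
          = ENNReal.ofReal γ * upf (fun w : S × T => f w.1 * g w.2) z)
      ↔
      ((∃ α : ℝ, 0 < α ∧ ∀ x : S, (f x : ℝ≥0∞) = ENNReal.ofReal α * upf f x) ∧
       (∃ β : ℝ, 0 < β ∧ ∀ y : T, (g y : ℝ≥0∞) = ENNReal.ofReal β * upf g y))) ∧
    (∀ α β : ℝ, 0 < α → 0 < β →
      (∀ x : S, (f x : ℝ≥0∞) = ENNReal.ofReal α * upf f x) →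
      (∀ y : T, (g y : ℝ≥0∞) = ENNReal.ofReal β * upf g y) →
      ∀ z : S × T,
        ((f z.1 * g z.2 : ℝ≥0) : ℝ≥0∞)
          = ENNReal.ofReal (α * β) * upf (fun w : S × T => f w.1 * g w.2) z) := by
  have hSne : Nonempty S := by
    by_contra h
    rw [not_nonempty_iff] at h
    rw [tsum_empty] at hfpdf
    simp at hfpdf
  have hTne : Nonempty T := by
    by_contra h
    rw [not_nonempty_iff] at h
    rw [tsum_empty] at hgpdf
    simp at hgpdf
  have hF0 : ∀ x : S, upf f x ≠ 0 := fun x h => by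
    have := le_upf f x
    rw [h, le_zero_iff] at this
    exact absurd this (by simpa using (hfsupp x).ne')
  have hG0 : ∀ y : T, upf g y ≠ 0 := fun y h => by
    have := le_upf g y
    rw [h, le_zero_iff] at this
    exact absurd this (by simpa using (hgsupp y).ne')
  have hFtop : ∀ x : S, upf f x ≠ ∞ := fun x =>
    ((upf_le_one' f hfpdf x).trans_lt ENNReal.one_lt_top).ne
  have hGtop : ∀ y : T, upf g y ≠ ∞ := fun y =>
    ((upf_le_one' g hgpdf y).trans_lt ENNReal.one_lt_top).ne
  have part2 : ∀ α β : ℝ, 0 < α → 0 < β →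
      (∀ x : S, (f x : ℝ≥0∞) = ENNReal.ofReal α * upf f x) →
      (∀ y : T, (g y : ℝ≥0∞) = ENNReal.ofReal β * upf g y) →
      ∀ z : S × T,
        ((f z.1 * g z.2 : ℝ≥0) : ℝ≥0∞)
          = ENNReal.ofReal (α * β) * upf (fun w : S × T => f w.1 * g w.2) z := by
    intro α β hα hβ hf hg z
    rw [ENNReal.coe_mul, hf z.1, hg z.2, upf_prod_eq, ENNReal.ofReal_mul hα.le]
    ring
  refine ⟨⟨?_, ?_⟩, part2⟩
  · rintro ⟨γ, hγ, hγeq⟩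
    obtain ⟨x0⟩ := hSne
    obtain ⟨y0⟩ := hTne
    constructor
    · set c : ℝ≥0∞ := ENNReal.ofReal γ * upf g y0 * ((g y0 : ℝ≥0∞))⁻¹ with hc
      have hg0 : ((g y0 : ℝ≥0)) ≠ 0 := (hgsupp y0).ne'
      have hctop : c ≠ ∞ :=
        ENNReal.mul_ne_top (ENNReal.mul_ne_top ENNReal.ofReal_ne_top (hGtop y0))
          (ENNReal.inv_ne_top.mpr (by simpa using hg0))
      have hc0 : c ≠ 0 := by
        refine mul_ne_zero (mul_ne_zero ?_ (hG0 y0)) (ENNReal.inv_ne_zero.mpr ENNReal.coe_ne_top)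
        simpa [ENNReal.ofReal_eq_zero, not_le] using hγ
      have key : ∀ x : S, (f x : ℝ≥0∞) = c * upf f x := by
        intro x
        have h := hγeq (x, y0)
        rw [ENNReal.coe_mul, upf_prod_eq] at h
        calc (f x : ℝ≥0∞) = (f x : ℝ≥0∞) * ((g y0 : ℝ≥0∞) * ((g y0 : ℝ≥0∞))⁻¹) := by
              rw [ENNReal.mul_inv_cancel (by simpa using hg0) ENNReal.coe_ne_top, mul_one]
          _ = ((f x : ℝ≥0∞) * (g y0 : ℝ≥0∞)) * ((g y0 : ℝ≥0∞))⁻¹ := by ring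
          _ = (ENNReal.ofReal γ * (upf f x * upf g y0)) * ((g y0 : ℝ≥0∞))⁻¹ := by rw [h]
          _ = c * upf f x := by rw [hc]; ring
      exact ⟨c.toReal, ENNReal.toReal_pos hc0 hctop,
        fun x => by rw [ENNReal.ofReal_toReal hctop]; exact key x⟩
    · set c : ℝ≥0∞ := ENNReal.ofReal γ * upf f x0 * ((f x0 : ℝ≥0∞))⁻¹ with hc
      have hf0 : ((f x0 : ℝ≥0)) ≠ 0 := (hfsupp x0).ne'
      have hctop : c ≠ ∞ :=
        ENNReal.mul_ne_top (ENNReal.mul_ne_top ENNReal.ofReal_ne_top (hFtop x0))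
          (ENNReal.inv_ne_top.mpr (by simpa using hf0))
      have hc0 : c ≠ 0 := by
        refine mul_ne_zero (mul_ne_zero ?_ (hF0 x0)) (ENNReal.inv_ne_zero.mpr ENNReal.coe_ne_top)
        simpa [ENNReal.ofReal_eq_zero, not_le] using hγ
      have key : ∀ y : T, (g y : ℝ≥0∞) = c * upf g y := by
        intro y
        have h := hγeq (x0, y)
        rw [ENNReal.coe_mul, upf_prod_eq] at h
        calc (g y : ℝ≥0∞) = (g y : ℝ≥0∞) * ((f x0 : ℝ≥0∞) * ((f x0 : ℝ≥0∞))⁻¹) := by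
              rw [ENNReal.mul_inv_cancel (by simpa using hf0) ENNReal.coe_ne_top, mul_one]
          _ = ((f x0 : ℝ≥0∞) * (g y : ℝ≥0∞)) * ((f x0 : ℝ≥0∞))⁻¹ := by ring
          _ = (ENNReal.ofReal γ * (upf f x0 * upf g y)) * ((f x0 : ℝ≥0∞))⁻¹ := by rw [h]
          _ = c * upf g y := by rw [hc]; ring
      exact ⟨c.toReal, ENNReal.toReal_pos hc0 hctop,
        fun y => by rw [ENNReal.ofReal_toReal hctop]; exact key y⟩
  · rintro ⟨⟨α, hα, hf⟩, ⟨β, hβ, hg⟩⟩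
    exact ⟨α * β, mul_pos hα hβ, part2 α β hα hβ hf hg⟩
end

section
/- Let (S, ⪯) be a rooted tree without leaves (no maximal elements) and let α ∈ (0,1). A function F : S → (0, 1] is the upper probability function of a probability density function on S with constant rate α if and only if F(e) = 1 and ∑_{y ∈ A(x)} F(y) = (1 − α) F(x) for every x ∈ S. -/
open scoped ENNReal NNReal

/-!
Both directions rest on splitting the up-set of `x` as `{x}` plus the disjoint up-sets of the
children of `x`. For the UPF of a PDF of constant rate `α` this reads
`F x = α F x + ∑_{y ∈ A(x)} F y`. Conversely, the recursion makes the total mass of `F` on the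
`n`-th generation above `x` equal to `(1 - α)^n F x`, so
`∑_{t ⪰ x} α F t = α F x ∑ₙ (1 - α)^n = F x`, i.e. `α F` is a PDF of constant rate `α` with UPF `F`.
-/

namespace RootedTree

variable {S : Type*} [PartialOrder S]

theorem exists_covBy_le_of_lt {x t : S} (ht : {s : S | s ≤ t}.Finite) (h : x < t) :
    ∃ y, x ⋖ y ∧ y ≤ t := by
  obtain ⟨y, ⟨hxy, hyt⟩, hmin⟩ :=
    (ht.subset fun s (hs : x < s ∧ s ≤ t) => hs.2).exists_minimal ⟨t, h, le_rfl⟩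
  exact ⟨y, ⟨hxy, fun c hxc hcy => hcy.not_ge (hmin ⟨hxc, hcy.le.trans hyt⟩ hcy.le)⟩, hyt⟩

theorem eq_of_covBy_of_le (htree : ∀ x a b : S, a ≤ x → b ≤ x → a ≤ b ∨ b ≤ a) {x y z t : S}
    (hy : x ⋖ y) (hz : x ⋖ z) (hyt : y ≤ t) (hzt : z ≤ t) : y = z := by
  rcases htree t y z hyt hzt with hyz | hzy
  · exact (hz.eq_or_eq hy.le hyz).resolve_left hy.ne'
  · exact ((hy.eq_or_eq hz.le hzy).resolve_left hz.ne').symm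

noncomputable def sigmaCovByEquiv (hfin : ∀ x : S, {t : S | t ≤ x}.Finite)
    (htree : ∀ x a b : S, a ≤ x → b ≤ x → a ≤ b ∨ b ≤ a) (x : S) :
    (Σ y : {y : S // x ⋖ y}, {t : S // (y : S) ≤ t}) ≃ {t : S // x < t} :=
  Equiv.ofBijective (fun p => ⟨p.2, p.1.2.lt.trans_le p.2.2⟩) ⟨
    by
      rintro ⟨⟨y, hy⟩, ⟨t, hyt⟩⟩ ⟨⟨z, hz⟩, ⟨_, hzt⟩⟩ ⟨⟩
      obtain rfl := eq_of_covBy_of_le htree hy hz hyt hzt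
      rfl,
    fun ⟨t, hxt⟩ =>
      let ⟨y, hy, hyt⟩ := exists_covBy_le_of_lt (hfin t) hxt
      ⟨⟨⟨y, hy⟩, ⟨t, hyt⟩⟩, rfl⟩⟩

theorem tsum_Ici_eq_add_tsum_Ioi (g : S → ℝ≥0∞) (x : S) :
    ∑' t : {t : S // x ≤ t}, g t = g x + ∑' t : {t : S // x < t}, g t := by
  change ∑' t : Set.Ici x, g t = _
  rw [← Set.Ioi_insert, ← Set.singleton_union,
    Summable.tsum_union_disjoint (by simp) ENNReal.summable ENNReal.summable, tsum_singleton]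
  rfl

theorem tsum_Ioi_eq_tsum_covBy (hfin : ∀ x : S, {t : S | t ≤ x}.Finite)
    (htree : ∀ x a b : S, a ≤ x → b ≤ x → a ≤ b ∨ b ≤ a) (g : S → ℝ≥0∞) (x : S) :
    ∑' t : {t : S // x < t}, g t =
      ∑' (y : {y : S // x ⋖ y}) (t : {t : S // (y : S) ≤ t}), g t := by
  rw [← (sigmaCovByEquiv hfin htree x).tsum_eq, ENNReal.tsum_sigma']
  rfl

theorem tsum_Ici_eq_add_tsum_covBy (hfin : ∀ x : S, {t : S | t ≤ x}.Finite)
    (htree : ∀ x a b : S, a ≤ x → b ≤ x → a ≤ b ∨ b ≤ a) (g : S → ℝ≥0∞) (x : S) :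
    ∑' t : {t : S // x ≤ t}, g t =
      g x + ∑' (y : {y : S // x ⋖ y}) (t : {t : S // (y : S) ≤ t}), g t := by
  rw [tsum_Ici_eq_add_tsum_Ioi, tsum_Ioi_eq_tsum_covBy hfin htree]

noncomputable def depth (x : S) : ℕ := (Set.Iio x).ncard

theorem depth_strictMono (hfin : ∀ x : S, {t : S | t ≤ x}.Finite) :
    StrictMono (depth : S → ℕ) := fun x t hxt =>
  Set.ncard_lt_ncard ((Set.ssubset_iff_of_subset (Set.Iio_subset_Iio hxt.le)).2
    ⟨x, hxt, lt_irrefl x⟩) ((hfin t).subset Set.Iio_subset_Iic_self)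

theorem depth_covBy (htree : ∀ x a b : S, a ≤ x → b ≤ x → a ≤ b ∨ b ≤ a) {x y : S}
    (hx : {s : S | s ≤ x}.Finite) (h : x ⋖ y) :
    depth y = depth x + 1 := by
  have hIio : Set.Iio y = insert x (Set.Iio x) := by
    ext s
    refine ⟨fun hsy => ?_, ?_⟩
    · rcases htree y s x hsy.le h.le with hsx | hxs
      · exact hsx.eq_or_lt
      · exact .inl (h.eq_or_eq hxs hsy.le |>.resolve_right hsy.ne)
    · rintro (rfl | hsx)
      exacts [h.lt, hsx.trans h.lt]
  rw [depth, hIio, Set.ncard_insert_of_notMem Set.self_notMem_Iio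
    (hx.subset Set.Iio_subset_Iic_self), depth]

theorem tsum_Ici_depth_eq_pow (hfin : ∀ x : S, {t : S | t ≤ x}.Finite)
    (htree : ∀ x a b : S, a ≤ x → b ≤ x → a ≤ b ∨ b ≤ a) {φ : S → ℝ≥0∞} {r : ℝ≥0∞}
    (hφ : ∀ x, ∑' y : {y : S // x ⋖ y}, φ y = r * φ x) (n : ℕ) (x : S) :
    ∑' t : {t : S // x ≤ t}, (if depth (t : S) = depth x + n then φ t else 0) =
      r ^ n * φ x := by
  induction n generalizing x with
  | zero =>
    rw [tsum_Ici_eq_add_tsum_Ioi (fun t => if depth t = depth x + 0 then φ t else 0), Nat.add_zero,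
      if_pos rfl, ENNReal.tsum_eq_zero.2 fun t => if_neg (depth_strictMono hfin t.2).ne', add_zero,
      pow_zero, one_mul]
  | succ n ih =>
    rw [tsum_Ici_eq_add_tsum_covBy hfin htree
        (fun t => if depth t = depth x + (n + 1) then φ t else 0), if_neg (by omega), zero_add]
    calc ∑' (y : {y : S // x ⋖ y}) (t : {t : S // (y : S) ≤ t}),
          (if depth (t : S) = depth x + (n + 1) then φ t else 0)
        = ∑' y : {y : S // x ⋖ y}, r ^ n * φ y := tsum_congr fun y => by
          rw [← ih y, depth_covBy htree (hfin x) y.2, add_right_comm, add_assoc]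
      _ = r ^ (n + 1) * φ x := by rw [ENNReal.tsum_mul_left, hφ, pow_succ, mul_assoc]

theorem tsum_Ici_eq_of_tsum_covBy (hfin : ∀ x : S, {t : S | t ≤ x}.Finite)
    (htree : ∀ x a b : S, a ≤ x → b ≤ x → a ≤ b ∨ b ≤ a) {φ : S → ℝ≥0∞} {r : ℝ≥0∞}
    (hφ : ∀ x, ∑' y : {y : S // x ⋖ y}, φ y = r * φ x) (x : S) :
    ∑' t : {t : S // x ≤ t}, φ t = (1 - r)⁻¹ * φ x := by
  calc ∑' t : {t : S // x ≤ t}, φ t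
      = ∑' (t : {t : S // x ≤ t}) (n : ℕ), if depth (t : S) = depth x + n then φ t else 0 :=
        tsum_congr fun t => by
          have hiff (n : ℕ) : depth (t : S) = depth x + n ↔ n = depth (t : S) - depth x := by
            have := (depth_strictMono hfin).monotone t.2
            omega
          simp_rw [hiff]
          exact (tsum_ite_eq _ fun _ => φ t).symm
    _ = ∑' n : ℕ, r ^ n * φ x := by
        rw [ENNReal.tsum_comm]
        exact tsum_congr (tsum_Ici_depth_eq_pow hfin htree hφ · x)
    _ = (1 - r)⁻¹ * φ x := by rw [ENNReal.tsum_mul_right, ENNReal.tsum_geometric]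

theorem ofReal_tsum_covBy_eq_of_upf (hfin : ∀ x : S, {t : S | t ≤ x}.Finite)
    (htree : ∀ x a b : S, a ≤ x → b ≤ x → a ≤ b ∨ b ≤ a) {α : ℝ} (hα0 : 0 ≤ α) (hα1 : α ≤ 1)
    {F : S → ℝ} (hF0 : ∀ x, 0 ≤ F x) {f : S → ℝ≥0}
    (hupf : ∀ x : S, ENNReal.ofReal (F x) = ∑' t : {t : S // x ≤ t}, (f t : ℝ≥0∞))
    (hrate : ∀ x : S, (f x : ℝ≥0∞) = ENNReal.ofReal (α * F x)) (x : S) :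
    ∑' y : {y : S // x ⋖ y}, ENNReal.ofReal (F y) = ENNReal.ofReal ((1 - α) * F x) := by
  have hsplit := tsum_Ici_eq_add_tsum_covBy hfin htree (fun t => (f t : ℝ≥0∞)) x
  simp only [← hupf] at hsplit
  rw [hrate] at hsplit
  rw [← ENNReal.add_right_inj (a := ENNReal.ofReal (α * F x)) ENNReal.ofReal_ne_top, ← hsplit,
    ← ENNReal.ofReal_add (mul_nonneg hα0 (hF0 x)) (mul_nonneg (sub_nonneg.2 hα1) (hF0 x))]
  ring_nf

theorem tsum_Ici_ofReal_mul_eq_of_tsum_covBy (hfin : ∀ x : S, {t : S | t ≤ x}.Finite)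
    (htree : ∀ x a b : S, a ≤ x → b ≤ x → a ≤ b ∨ b ≤ a) {α : ℝ} (hα0 : 0 < α) (hα1 : α ≤ 1)
    {F : S → ℝ}
    (hrec : ∀ x : S,
      ∑' y : {y : S // x ⋖ y}, ENNReal.ofReal (F y) = ENNReal.ofReal ((1 - α) * F x))
    (x : S) :
    ∑' t : {t : S // x ≤ t}, ENNReal.ofReal (α * F t) = ENNReal.ofReal (F x) := by
  have hβ : 0 ≤ 1 - α := sub_nonneg.2 hα1
  have hrec' (y : S) : ∑' z : {z : S // y ⋖ z}, ENNReal.ofReal (F z)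
      = ENNReal.ofReal (1 - α) * ENNReal.ofReal (F y) := by
    rw [hrec, ENNReal.ofReal_mul hβ]
  have hone_sub : 1 - ENNReal.ofReal (1 - α) = ENNReal.ofReal α := by
    rw [← ENNReal.ofReal_one, ← ENNReal.ofReal_sub _ hβ, sub_sub_cancel]
  simp_rw [ENNReal.ofReal_mul hα0.le]
  rw [ENNReal.tsum_mul_left,
    tsum_Ici_eq_of_tsum_covBy hfin htree (φ := fun t => ENNReal.ofReal (F t)) hrec', hone_sub,
    ← mul_assoc, ENNReal.mul_inv_cancel (ENNReal.ofReal_pos.2 hα0).ne' ENNReal.ofReal_ne_top,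
    one_mul]

end RootedTree

theorem tree_constantRate_upf_characterization_general
    {S : Type*} [PartialOrder S] [OrderBot S]
    (hfin : ∀ x : S, {t : S | t ≤ x}.Finite)
    (htree : ∀ x a b : S, a ≤ x → b ≤ x → a ≤ b ∨ b ≤ a)
    (α : ℝ) (hα0 : 0 < α) (hα1 : α < 1)
    (F : S → ℝ) (hF0 : ∀ x : S, 0 < F x) :
    (∃ f : S → ℝ≥0, (∑' x : S, (f x : ℝ≥0∞) = 1) ∧
      (∀ x : S, ENNReal.ofReal (F x) = ∑' t : {t : S // x ≤ t}, (f t : ℝ≥0∞)) ∧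
      (∀ x : S, (f x : ℝ≥0∞) = ENNReal.ofReal (α * F x)))
    ↔
    (F ⊥ = 1 ∧
     ∀ x : S, ∑' y : {y : S // x ⋖ y}, ENNReal.ofReal (F y)
        = ENNReal.ofReal ((1 - α) * F x)) := by
  have tsum_Ici_bot (g : S → ℝ≥0∞) : ∑' t : {t : S // ⊥ ≤ t}, g t = ∑' x, g x :=
    (Equiv.subtypeUnivEquiv fun _ => bot_le).tsum_eq g
  constructor
  · rintro ⟨f, hsum, hupf, hrate⟩
    exact ⟨ENNReal.ofReal_eq_one.1 ((hupf ⊥).trans ((tsum_Ici_bot _).trans hsum)),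
      RootedTree.ofReal_tsum_covBy_eq_of_upf hfin htree hα0.le hα1.le (fun x => (hF0 x).le)
        hupf hrate⟩
  · rintro ⟨hbot, hrec⟩
    have hupf := RootedTree.tsum_Ici_ofReal_mul_eq_of_tsum_covBy hfin htree hα0 hα1.le hrec
    refine ⟨fun x => (α * F x).toNNReal, ?_, fun x => (hupf x).symm, fun x => rfl⟩
    rw [← tsum_Ici_bot, ← ENNReal.ofReal_one, ← hbot]
    exact hupf ⊥

/-- Let `(S, ⪯)` be a rooted tree without leaves (no maximal
elements) and let `α ∈ (0,1)`. A function `F : S → (0,1]` is the UPF of a PDF on `S`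
with constant rate `α` iff `F(e) = 1` and `∑_{y ∈ A(x)} F(y) = (1 − α) F(x)` for every
`x` (where `A(x)` is the set of children of `x`). -/
theorem tree_constantRate_upf_characterization
    {S : Type*} [Countable S] [PartialOrder S] [OrderBot S]
    (hfin : ∀ x : S, {t : S | t ≤ x}.Finite)
    (htree : ∀ x a b : S, a ≤ x → b ≤ x → a ≤ b ∨ b ≤ a)
    (hnoleaf : ∀ x : S, ¬ IsMax x)
    (α : ℝ) (hα0 : 0 < α) (hα1 : α < 1)
    (F : S → ℝ) (hF0 : ∀ x : S, 0 < F x) (hF1 : ∀ x : S, F x ≤ 1) :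
    (∃ f : S → ℝ≥0, (∑' x : S, (f x : ℝ≥0∞) = 1) ∧
      (∀ x : S, ENNReal.ofReal (F x) = ∑' t : {t : S // x ≤ t}, (f t : ℝ≥0∞)) ∧
      (∀ x : S, (f x : ℝ≥0∞) = ENNReal.ofReal (α * F x)))
    ↔
    (F ⊥ = 1 ∧
     ∀ x : S, ∑' y : {y : S // x ⋖ y}, ENNReal.ofReal (F y)
        = ENNReal.ofReal ((1 - α) * F x)) :=
  tree_constantRate_upf_characterization_general hfin htree α hα0 hα1 F hF0
end

section
/- Let S be the collection of finite subsets of ℕ₊ partially ordered by set inclusion, let f be a PDF on S with support S and constant rate α (f(x) = α ∑_{y ⊇ x} f(y) for all x ∈ S), and let p_k = ∑_{x : #(x) = k} f(x) be the distribution of the cardinality U = #(X). Assume ∑_{j=0}^∞ C(j,k) p_j < ∞ for every k ∈ ℕ. Then for every k ∈ ℕ, α p_k = ∑_{j=0}^∞ (−1)^{j+k} C(j,k) p_j, i.e. α P(U = k) = E[(−1)^{U+k} C(U,k)]. -/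
/-!
Summing the constant-rate equation `f x = α ∑_{y ⊇ x} f y` over the sets `x` of cardinality `k`,
each `y` is counted once for each of its `C(#y, k)` subsets of size `k`, so
`p k = α ∑_i C(i, k) p i`. Binomial inversion of this relation, which is legitimate because the
moment hypothesis makes the double series `∑_j ∑_i (-1)^(j+k) C(j,k) C(i,j) p i` absolutely
convergent, gives `α p k = ∑_j (-1)^(j+k) C(j,k) p j`.
-/

open Finset
open scoped ENNReal NNReal

section FinsetTsum

variable {β : Type*}

theorem tsum_finset_eq_tsum_tsum_card (g : Finset β → ℝ≥0∞) :
    ∑' y, g y = ∑' j, ∑' y : {y : Finset β // #y = j}, g y := by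
  rw [← ENNReal.tsum_sigma]
  exact ((Equiv.sigmaFiberEquiv card).tsum_eq g).symm

def powersetCardSigmaEquiv (k : ℕ) :
    (Σ y : Finset β, powersetCard k y) ≃ Σ x : {x : Finset β // #x = k}, {y // x.1 ⊆ y} where
  toFun z := ⟨⟨z.2, (mem_powersetCard.1 z.2.2).2⟩, ⟨z.1, (mem_powersetCard.1 z.2.2).1⟩⟩
  invFun z := ⟨z.2, z.1, mem_powersetCard.2 ⟨z.2.2, z.1.2⟩⟩
  left_inv _ := rfl
  right_inv _ := rfl

theorem tsum_tsum_superset_eq_tsum_choose_card_mul (g : Finset β → ℝ≥0∞) (k : ℕ) :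
    ∑' (x : {x : Finset β // #x = k}) (y : {y // x.1 ⊆ y}), g y = ∑' y, (#y).choose k * g y := by
  rw [← ENNReal.tsum_sigma, ← (powersetCardSigmaEquiv k).tsum_eq, ENNReal.tsum_sigma']
  refine tsum_congr fun y => ?_
  simp [powersetCardSigmaEquiv, tsum_fintype, card_powersetCard]

theorem tsum_card_eq_mul_tsum_choose_mul_tsum_card {g : Finset β → ℝ≥0∞} {c : ℝ≥0∞}
    (hrate : ∀ x, g x = c * ∑' y : {y // x ⊆ y}, g y) (k : ℕ) :
    ∑' x : {x : Finset β // #x = k}, g x =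
      c * ∑' i, i.choose k * ∑' y : {y : Finset β // #y = i}, g y := by
  rw [tsum_congr fun x : {x : Finset β // #x = k} => hrate x.1, ENNReal.tsum_mul_left,
    tsum_tsum_superset_eq_tsum_choose_card_mul, tsum_finset_eq_tsum_tsum_card]
  congr 1
  refine tsum_congr fun i => ?_
  rw [← ENNReal.tsum_mul_left]
  exact tsum_congr fun y => by rw [y.2]

end FinsetTsum

theorem sum_neg_one_pow_mul_choose_mul_choose (i k : ℕ) :
    ∑ j ∈ range (i + 1), (-1 : ℤ) ^ (j + k) * j.choose k * i.choose j =
      if i = k then 1 else 0 := by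
  have vanish : ∀ j < k, (-1 : ℤ) ^ (j + k) * j.choose k * i.choose j = 0 := fun j hj => by
    simp [Nat.choose_eq_zero_of_lt hj]
  rcases lt_or_ge i k with hik | hki
  · rw [if_neg hik.ne]
    exact sum_eq_zero fun j hj => vanish j (by grind)
  · -- `C(i, k+m) C(k+m, k) = C(i, k) C(i-k, m)` reduces the sum to an alternating row sum.
    have hterm : ∀ m, (-1 : ℤ) ^ (k + m + k) * (k + m).choose k * i.choose (k + m) =
        i.choose k * ((-1) ^ m * (i - k).choose m) := fun m => by
      have hchoose : ((k + m).choose k : ℤ) * i.choose (k + m) = i.choose k * (i - k).choose m := by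
        have := Nat.choose_mul (n := i) (Nat.le_add_right k m)
        rw [Nat.add_sub_cancel_left, mul_comm] at this
        exact_mod_cast this
      rw [show k + m + k = m + 2 * k by ring, pow_add, pow_mul, mul_assoc, hchoose]
      simp; ring
    rw [← sum_range_add_sum_Ico _ (by omega : k ≤ i + 1),
      sum_eq_zero fun j hj => vanish j (mem_range.1 hj), zero_add, sum_Ico_eq_sum_range,
      show i + 1 - k = i - k + 1 by omega]
    simp_rw [hterm, ← mul_sum, Int.alternating_sum_range_choose]
    by_cases hik : i = k <;> simp [hik]; omega

theorem tsum_neg_one_pow_mul_choose_mul_tsum_choose_mul {p : ℕ → ℝ} (hp : 0 ≤ p) (k : ℕ)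
    (hrow : ∀ j, Summable fun i => (i.choose j : ℝ) * p i)
    (hcol : Summable fun j => (j.choose k : ℝ) * ∑' i, (i.choose j : ℝ) * p i) :
    ∑' j, (-1 : ℝ) ^ (j + k) * j.choose k * ∑' i, (i.choose j : ℝ) * p i = p k := by
  set g : ℕ → ℕ → ℝ := fun j i => (-1 : ℝ) ^ (j + k) * j.choose k * (i.choose j * p i)
  have hg_row : ∀ j, Summable (g j) := fun j => (hrow j).mul_left _
  have hg_col_finite : ∀ i, ∀ j ∉ range (i + 1), g j i = 0 := fun i j hj => by
    simp [g, Nat.choose_eq_zero_of_lt (by simpa using hj : i < j)]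
  have hg_col : ∀ i, ∑' j, g j i = if i = k then p i else 0 := fun i => by
    rw [tsum_eq_sum (hg_col_finite i)]
    have := congrArg (fun n : ℤ => (n : ℝ) * p i) (sum_neg_one_pow_mul_choose_mul_choose i k)
    push_cast [sum_mul, apply_ite] at this
    simpa [g, mul_assoc] using this
  set G : ℕ × ℕ → ℝ := fun z => (z.1.choose k : ℝ) * (z.2.choose z.1 * p z.2)
  have hG : Summable G := by
    refine (summable_prod_of_nonneg fun z => ?_).2 ⟨fun j => ?_, ?_⟩
    · exact mul_nonneg (Nat.cast_nonneg _) (mul_nonneg (Nat.cast_nonneg _) (hp _))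
    · exact (hrow j).mul_left (j.choose k : ℝ)
    · simpa only [G, tsum_mul_left] using hcol
  have hg : Summable (Function.uncurry g) := hG.of_norm_bounded fun z => by
    simp [g, G, Function.uncurry, abs_of_nonneg (hp _)]
  calc ∑' j, (-1 : ℝ) ^ (j + k) * j.choose k * ∑' i, (i.choose j : ℝ) * p i
      = ∑' j, ∑' i, g j i := tsum_congr fun j => tsum_mul_left.symm
    _ = ∑' i, ∑' j, g j i :=
      (hg.tsum_comm' hg_row fun i => summable_of_ne_finset_zero (hg_col_finite i)).symm
    _ = p k := by simp_rw [hg_col, tsum_ite_eq]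

theorem subsets_constantRate_cardinality_identity_general
    (f : Finset ℕ+ → ℝ≥0)
    (hpdf : ∑' x : Finset ℕ+, (f x : ℝ≥0∞) = 1)
    (α : ℝ) (hα : 0 < α)
    (hrate : ∀ x : Finset ℕ+,
      (f x : ℝ≥0∞) = ENNReal.ofReal α * ∑' y : {y : Finset ℕ+ // x ⊆ y}, (f y : ℝ≥0∞))
    (p : ℕ → ℝ)
    (hp : ∀ k : ℕ, p k = ∑' x : {x : Finset ℕ+ // x.card = k}, (f x : ℝ))
    (hmoment : ∀ k : ℕ, Summable (fun j : ℕ => (j.choose k : ℝ) * p j)) :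
    ∀ k : ℕ, α * p k = ∑' j : ℕ, (-1 : ℝ) ^ (j + k) * (j.choose k : ℝ) * p j := by
  have hfinite : ∀ j, ∑' x : {x : Finset ℕ+ // #x = j}, (f x : ℝ≥0∞) ≠ ∞ := fun j =>
    ne_top_of_le_ne_top (hpdf ▸ ENNReal.one_ne_top)
      (ENNReal.tsum_comp_le_tsum_of_injective Subtype.val_injective _)
  have hp_toReal : ∀ j, p j = (∑' x : {x : Finset ℕ+ // #x = j}, (f x : ℝ≥0∞)).toReal := fun j => by
    simp [hp, ENNReal.tsum_toReal_eq]
  have hp_nonneg : 0 ≤ p := fun j => hp_toReal j ▸ ENNReal.toReal_nonneg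
  have hp_rec : ∀ j, p j = α * ∑' i, (i.choose j : ℝ) * p i := fun j => by
    rw [hp_toReal, tsum_card_eq_mul_tsum_choose_mul_tsum_card hrate, ENNReal.toReal_mul,
      ENNReal.toReal_ofReal hα.le, ENNReal.tsum_toReal_eq fun i => ENNReal.mul_ne_top
        (ENNReal.natCast_ne_top _) (hfinite i)]
    simp [hp_toReal]
  intro k
  have hcol : Summable fun j => (j.choose k : ℝ) * ∑' i, (i.choose j : ℝ) * p i :=
    ((hmoment k).div_const α).congr fun j => by rw [hp_rec j]; field_simp
  calc α * p k
      = α * ∑' j, (-1 : ℝ) ^ (j + k) * j.choose k * ∑' i, (i.choose j : ℝ) * p i := by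
        rw [tsum_neg_one_pow_mul_choose_mul_tsum_choose_mul hp_nonneg k hmoment hcol]
    _ = ∑' j, (-1 : ℝ) ^ (j + k) * j.choose k * p j := by
        rw [← tsum_mul_left]
        exact tsum_congr fun j => by rw [hp_rec j]; ring

/-- Let `S` be the poset of finite subsets of `ℕ₊` ordered by
inclusion, let `f` be a PDF on `S` with support `S` and constant rate `α`, and let
`p k = P(#(X) = k)` be the distribution of the cardinality of the random set. If the
binomial moments `∑_j C(j,k) p_j` are all finite, then
`α p_k = ∑_{j} (−1)^{j+k} C(j,k) p_j`, i.e. `α P(U = k) = E[(−1)^{U+k} C(U,k)]`. -/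
theorem subsets_constantRate_cardinality_identity
    (f : Finset ℕ+ → ℝ≥0)
    (hsupp : ∀ x : Finset ℕ+, 0 < f x)
    (hpdf : ∑' x : Finset ℕ+, (f x : ℝ≥0∞) = 1)
    (α : ℝ) (hα : 0 < α)
    (hrate : ∀ x : Finset ℕ+,
      (f x : ℝ≥0∞) = ENNReal.ofReal α * ∑' y : {y : Finset ℕ+ // x ⊆ y}, (f y : ℝ≥0∞))
    (p : ℕ → ℝ)
    (hp : ∀ k : ℕ, p k = ∑' x : {x : Finset ℕ+ // x.card = k}, (f x : ℝ))
    (hmoment : ∀ k : ℕ, Summable (fun j : ℕ => (j.choose k : ℝ) * p j)) :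
    ∀ k : ℕ, α * p k = ∑' j : ℕ, (-1 : ℝ) ^ (j + k) * (j.choose k : ℝ) * p j :=
  subsets_constantRate_cardinality_identity_general f hpdf α hα hrate p hp hmoment
end

section
/- Let α ∈ (0,1) and let (p_n)_{n∈ℕ} be a probability mass function on ℕ. Then p satisfies p_n = α ∑_{j=0}^∞ C(j,n) p_j for every n ∈ ℕ (with all these sums finite) if and only if p is the Poisson distribution with mean μ = −ln(α), i.e. p_n = e^{−μ} μ^n / n! = α (−ln α)^n / n! for all n ∈ ℕ. -/
/-!
Let `Φ(z) = ∑ pₙ zⁿ`. Expanding `(z + 1)ᵏ` binomially and exchanging the sums, the condition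
`pₙ = α ∑ⱼ C(j,n) pⱼ` says exactly `Φ(z + 1) = Φ(z) / α`; the same exchange, run on nonnegative
terms, bootstraps the convergence of `Φ(1)` to convergence everywhere, so `Φ` is entire. Hence `G(z) = Φ(z) αᶻ` is entire and `1`-periodic. As `p ≥ 0`,
`‖Φ(z)‖ ≤ Φ(‖z‖) ≤ p₀ α^(-‖z‖-1)`, so `‖G(z)‖ ≤ p₀ α^(re z - ‖z‖ - 1)`, and translating `z` by a
period far to the right, where `‖z‖ - re z ≤ 1`, shows that `G` is bounded. By Liouville,
`G ≡ G(0) = p₀ = α`, i.e. `Φ(z) = α e^(μz)` with `μ = -log α`, and comparing coefficients gives the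
Poisson law. The converse is a direct computation.
-/

open Finset
open scoped Nat NNReal

lemma hasSum_choose_mul_pow {R : Type*} [CommSemiring R] [TopologicalSpace R] (k : ℕ) (z : R) :
    HasSum (fun n => (k.choose n : R) * z ^ n) ((z + 1) ^ k) := by
  have h : HasSum (fun n => (k.choose n : R) * z ^ n)
      (∑ n ∈ range (k + 1), (k.choose n : R) * z ^ n) :=
    hasSum_sum_of_ne_finset_zero fun n hn => by
      simp [Nat.choose_eq_zero_of_lt (by simpa [Nat.lt_succ_iff] using hn : k < n)]
  convert h using 1
  simp [add_pow, mul_comm]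

lemma summable_and_eq_mul_tsum_iff_hasSum {ι K : Type*} [Field K] [TopologicalSpace K]
    [T2Space K] {α a : K} (hα : α ≠ 0) {f : ι → K} :
    (Summable f ∧ a = α * ∑' n, f n) ↔ HasSum f (a / α) := by
  refine ⟨fun ⟨hf, ha⟩ => ?_, fun hf => ⟨hf.summable, ?_⟩⟩
  · rw [ha, mul_div_cancel_left₀ _ hα]
    exact hf.hasSum
  · rw [hf.tsum_eq, mul_div_cancel₀ _ hα]

lemma hasSum_choose_mul_pow_div_factorial (μ : ℝ) (n : ℕ) :
    HasSum (fun j => (j.choose n : ℝ) * (μ ^ j / j !)) (μ ^ n / n ! * Real.exp μ) := by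
  rw [← hasSum_nat_add_iff' n]
  have hlow : ∑ j ∈ range n, (j.choose n : ℝ) * (μ ^ j / j !) = 0 :=
    sum_eq_zero fun j hj => by simp [Nat.choose_eq_zero_of_lt (mem_range.1 hj)]
  rw [hlow, sub_zero]
  have hexp : HasSum (fun j => μ ^ j / j !) (Real.exp μ) := by
    rw [Real.exp_eq_exp_ℝ]
    exact NormedSpace.expSeries_div_hasSum_exp μ
  have hterm : ∀ j, ((j + n).choose n : ℝ) * (μ ^ (j + n) / (j + n)!)
      = μ ^ n / n ! * (μ ^ j / j !) := fun j => by
    rw [← Nat.choose_symm_add, Nat.cast_add_choose, pow_add]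
    field_simp
  simpa only [hterm] using hexp.mul_left (μ ^ n / n !)

namespace FormalMultilinearSeries

variable {𝕜 : Type*} [NontriviallyNormedField 𝕜] [CompleteSpace 𝕜]

theorem hasFPowerSeriesOnBall_tsum_mul_pow {c : ℕ → 𝕜}
    (hc : ∀ r : ℝ≥0, Summable fun n => ‖c n‖ * (r : ℝ) ^ n) :
    HasFPowerSeriesOnBall (fun z => ∑' n, c n * z ^ n) (ofScalars 𝕜 c) 0 ⊤ := by
  have hr : (ofScalars 𝕜 c).radius = ⊤ :=
    radius_eq_top_of_summable_norm _ (by simpa only [ofScalars_norm] using hc)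
  have h := (ofScalars 𝕜 c).hasFPowerSeriesOnBall (by simp [hr])
  rw [hr] at h
  convert h using 1
  exact (ofScalarsSum_eq_tsum c).symm

theorem coeff_eq_of_tsum_mul_pow_eq {c d : ℕ → 𝕜}
    (hc : ∀ r : ℝ≥0, Summable fun n => ‖c n‖ * (r : ℝ) ^ n)
    (hd : ∀ r : ℝ≥0, Summable fun n => ‖d n‖ * (r : ℝ) ^ n)
    (h : ∀ z, ∑' n, c n * z ^ n = ∑' n, d n * z ^ n) : c = d := by
  have hc' := (hasFPowerSeriesOnBall_tsum_mul_pow hc).hasFPowerSeriesAt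
  rw [funext h] at hc'
  exact ofScalars_series_injective 𝕜 𝕜
    (hc'.eq_formalMultilinearSeries (hasFPowerSeriesOnBall_tsum_mul_pow hd).hasFPowerSeriesAt)

end FormalMultilinearSeries

lemma Complex.norm_le_re_add_one_of_im_sq_le {w : ℂ} (h : w.im ^ 2 ≤ 2 * w.re) :
    ‖w‖ ≤ w.re + 1 := by
  have hre : 0 ≤ w.re := by nlinarith [sq_nonneg w.im]
  rw [← sq_le_sq₀ (norm_nonneg w) (by linarith), Complex.sq_norm, Complex.normSq_apply]
  nlinarith

noncomputable def pgf (𝕜 : Type*) [RCLike 𝕜] (p : ℕ → ℝ) (z : 𝕜) : 𝕜 :=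
  ∑' n, (p n : 𝕜) * z ^ n

section pgf

variable {𝕜 : Type*} [RCLike 𝕜] {p : ℕ → ℝ}

lemma pgf_zero : pgf 𝕜 p 0 = p 0 := by
  rw [pgf, tsum_eq_single 0 fun n hn => by simp [hn]]
  simp

lemma norm_pgf_le_pgf_norm (hp0 : ∀ n, 0 ≤ p n) {z : 𝕜}
    (hs : Summable fun n => p n * ‖z‖ ^ n) : ‖pgf 𝕜 p z‖ ≤ pgf ℝ p ‖z‖ := by
  have hnorm : ∀ n, ‖(p n : 𝕜) * z ^ n‖ = p n * ‖z‖ ^ n := fun n => by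
    simp [norm_mul, abs_of_nonneg (hp0 n)]
  refine (norm_tsum_le_tsum_norm ?_).trans_eq ?_
  · simpa only [hnorm] using hs
  · simp only [hnorm, pgf, RCLike.ofReal_real_eq_id, id]

lemma differentiable_pgf (hp0 : ∀ n, 0 ≤ p n) (hs : ∀ r : ℝ, Summable fun n => p n * r ^ n) :
    Differentiable ℂ (pgf ℂ p) := by
  have h := FormalMultilinearSeries.hasFPowerSeriesOnBall_tsum_mul_pow
    (c := fun n => (p n : ℂ)) fun r => by simpa [abs_of_nonneg (hp0 _)] using hs r
  exact fun z => (h.analyticAt_of_mem (by simp)).differentiableAt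

end pgf

/-- `pₙ = α E[C(U, n)]` for all `n`, the binomial moments `E[C(U, n)] = ∑ⱼ C(j, n) pⱼ` being
required to converge. -/
def HasConstantRate (α : ℝ) (p : ℕ → ℝ) : Prop :=
  ∀ n, HasSum (fun j => (j.choose n : ℝ) * p j) (p n / α)

namespace HasConstantRate

variable {α : ℝ} {p : ℕ → ℝ}

lemma summable (h : HasConstantRate α p) : Summable p := by
  simpa using (h 0).summable

lemma summable_choose_mul_mul_pow (h : HasConstantRate α p) (hp0 : ∀ n, 0 ≤ p n) {r : ℝ}
    (hr : 0 ≤ r) (hs : Summable fun n => p n * r ^ n) :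
    Summable fun nk : ℕ × ℕ => (nk.2.choose nk.1 : ℝ) * p nk.2 * r ^ nk.1 := by
  have hf0 : 0 ≤ fun nk : ℕ × ℕ => (nk.2.choose nk.1 : ℝ) * p nk.2 * r ^ nk.1 :=
    fun nk => by have := hp0 nk.2; positivity
  refine (summable_prod_of_nonneg hf0).2 ⟨fun n => ((h n).mul_right (r ^ n)).summable, ?_⟩
  refine (hs.div_const α).congr fun n => ?_
  rw [((h n).mul_right (r ^ n)).tsum_eq]
  ring

lemma summable_mul_pow_add_one (h : HasConstantRate α p) (hp0 : ∀ n, 0 ≤ p n) {r : ℝ}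
    (hr : 0 ≤ r) (hs : Summable fun n => p n * r ^ n) :
    Summable fun n => p n * (r + 1) ^ n := by
  refine (h.summable_choose_mul_mul_pow hp0 hr hs).prod_symm.prod.congr fun k => ?_
  rw [← ((hasSum_choose_mul_pow k r).mul_left (p k)).tsum_eq]
  exact tsum_congr fun n => by simp only [Prod.fst_swap, Prod.snd_swap]; ring

lemma summable_mul_pow (h : HasConstantRate α p) (hp0 : ∀ n, 0 ≤ p n) (r : ℝ) :
    Summable fun n => p n * r ^ n := by
  have hnat : ∀ m : ℕ, Summable fun n => p n * ((m : ℝ) + 1) ^ n := by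
    intro m
    induction m with
    | zero => simpa using h.summable
    | succ m ih =>
      push_cast
      exact h.summable_mul_pow_add_one hp0 (by positivity) ih
  refine .of_norm_bounded (hnat ⌈|r|⌉₊) fun n => ?_
  rw [norm_mul, norm_pow, Real.norm_of_nonneg (hp0 n)]
  have hr : ‖r‖ ≤ ⌈|r|⌉₊ + 1 := (Nat.le_ceil _).trans (le_add_of_nonneg_right zero_le_one)
  exact mul_le_mul_of_nonneg_left (pow_le_pow_left₀ (norm_nonneg r) hr n) (hp0 n)

lemma hasSum_pgf_add_one {𝕜 : Type*} [RCLike 𝕜] (h : HasConstantRate α p)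
    (hp0 : ∀ n, 0 ≤ p n) (z : 𝕜) :
    HasSum (fun k => (p k : 𝕜) * (z + 1) ^ k) (pgf 𝕜 p z / α) := by
  set f : ℕ × ℕ → 𝕜 := fun nk => (nk.2.choose nk.1 : 𝕜) * p nk.2 * z ^ nk.1
  have hf : Summable f := by
    refine .of_norm <| (h.summable_choose_mul_mul_pow hp0 (norm_nonneg z)
      (h.summable_mul_pow hp0 ‖z‖)).congr fun nk => ?_
    simp [f, norm_mul, norm_pow, abs_of_nonneg (hp0 _)]
  have hrows : HasSum (fun n => (p n : 𝕜) * z ^ n / α) (∑' nk, f nk) := by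
    refine hf.hasSum.prod_fiberwise fun n => ?_
    have hn := ((RCLike.hasSum_ofReal 𝕜).2 (h n)).mul_right (z ^ n)
    push_cast at hn
    rwa [div_mul_eq_mul_div] at hn
  have hcols : HasSum (fun k => (p k : 𝕜) * (z + 1) ^ k) (∑' nk, f nk) := by
    refine ((Equiv.prodComm ℕ ℕ).hasSum_iff.2 hf.hasSum).prod_fiberwise fun k => ?_
    refine ((hasSum_choose_mul_pow k z).mul_left (p k : 𝕜)).congr_fun fun n => ?_
    simp only [f, Function.comp_apply, Equiv.prodComm_apply, Prod.swap_prod_mk]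
    ring
  rwa [pgf, ← tsum_div_const, hrows.tsum_eq]

lemma pgf_natCast {𝕜 : Type*} [RCLike 𝕜] (h : HasConstantRate α p) (hp0 : ∀ n, 0 ≤ p n)
    (m : ℕ) : pgf 𝕜 p m = p 0 / α ^ m := by
  induction m with
  | zero => simp [pgf_zero]
  | succ m ih =>
    rw [Nat.cast_succ, pgf, (h.hasSum_pgf_add_one hp0 (m : 𝕜)).tsum_eq, ih, pow_succ, div_div]

lemma pgf_le_exp (h : HasConstantRate α p) (hα0 : 0 < α) (hα1 : α ≤ 1) (hp0 : ∀ n, 0 ≤ p n)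
    {r : ℝ} (hr : 0 ≤ r) : pgf ℝ p r ≤ p 0 / α * Real.exp (-Real.log α * r) := by
  have hlog : 0 ≤ -Real.log α := neg_nonneg.2 (Real.log_nonpos hα0.le hα1)
  have hp00 := hp0 0
  calc pgf ℝ p r ≤ pgf ℝ p ⌈r⌉₊ := by
        refine Summable.tsum_le_tsum (fun n => ?_) (h.summable_mul_pow hp0 r)
          (h.summable_mul_pow hp0 _)
        exact mul_le_mul_of_nonneg_left (pow_le_pow_left₀ hr (Nat.le_ceil r) n) (hp0 n)
    _ = p 0 * Real.exp (-Real.log α * ⌈r⌉₊) := by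
        simp only [h.pgf_natCast hp0, RCLike.ofReal_real_eq_id, id]
        rw [← Real.rpow_natCast, Real.rpow_def_of_pos hα0, div_eq_mul_inv, ← Real.exp_neg,
          neg_mul]
    _ ≤ p 0 * Real.exp (-Real.log α * (r + 1)) := by
        gcongr
        exact (Nat.ceil_lt_add_one hr).le
    _ = p 0 / α * Real.exp (-Real.log α * r) := by
        rw [mul_add, mul_one, Real.exp_add, Real.exp_neg, Real.exp_log hα0]
        ring

lemma periodic_pgf_mul_exp (h : HasConstantRate α p) (hα0 : 0 < α) (hp0 : ∀ n, 0 ≤ p n) :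
    Function.Periodic (fun z => pgf ℂ p z * Complex.exp (Real.log α * z)) 1 := fun z => by
  have hα : (α : ℂ) ≠ 0 := Complex.ofReal_ne_zero.2 hα0.ne'
  dsimp only
  rw [pgf, (h.hasSum_pgf_add_one hp0 z).tsum_eq, RCLike.ofReal_eq_complex_ofReal, mul_add,
    mul_one, Complex.exp_add, ← Complex.ofReal_exp, Real.exp_log hα0]
  field_simp

lemma norm_pgf_mul_exp_le (h : HasConstantRate α p) (hα0 : 0 < α) (hα1 : α ≤ 1)
    (hp0 : ∀ n, 0 ≤ p n) (z : ℂ) :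
    ‖pgf ℂ p z * Complex.exp (Real.log α * z)‖ ≤ p 0 / α * Real.exp (-Real.log α) := by
  have hlog : 0 ≤ -Real.log α := neg_nonneg.2 (Real.log_nonpos hα0.le hα1)
  have hp00 := hp0 0
  set N := ⌈z.im ^ 2 / 2 - z.re⌉₊
  set w := z + N with hw
  have hwre : ‖w‖ ≤ w.re + 1 := by
    refine Complex.norm_le_re_add_one_of_im_sq_le ?_
    have := Nat.le_ceil (z.im ^ 2 / 2 - z.re)
    simp only [hw, Complex.add_re, Complex.add_im, Complex.natCast_re, Complex.natCast_im]
    linarith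
  have hshift := (h.periodic_pgf_mul_exp hα0 hp0).nat_mul N z
  rw [mul_one] at hshift
  rw [← hshift, ← hw]
  calc ‖pgf ℂ p w * Complex.exp (Real.log α * w)‖
      = ‖pgf ℂ p w‖ * Real.exp (Real.log α * w.re) := by
        rw [norm_mul, Complex.norm_exp, Complex.re_ofReal_mul]
    _ ≤ p 0 / α * Real.exp (-Real.log α * ‖w‖) * Real.exp (Real.log α * w.re) := by
        gcongr
        exact (norm_pgf_le_pgf_norm hp0 (h.summable_mul_pow hp0 _)).trans
          (h.pgf_le_exp hα0 hα1 hp0 (norm_nonneg w))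
    _ = p 0 / α * Real.exp (-Real.log α * (‖w‖ - w.re)) := by
        rw [mul_assoc, ← Real.exp_add]
        ring_nf
    _ ≤ p 0 / α * Real.exp (-Real.log α) := by
        gcongr
        exact mul_le_of_le_one_right hlog (by linarith)

lemma pgf_eq_mul_exp (h : HasConstantRate α p) (hα0 : 0 < α) (hα1 : α ≤ 1)
    (hp0 : ∀ n, 0 ≤ p n) (z : ℂ) : pgf ℂ p z = p 0 * Complex.exp (-Real.log α * z) := by
  have hG : Differentiable ℂ fun z => pgf ℂ p z * Complex.exp (Real.log α * z) :=
    (differentiable_pgf hp0 (h.summable_mul_pow hp0)).mul (by fun_prop)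
  have hconst := hG.apply_eq_apply_of_bounded (isBounded_iff_forall_norm_le.2
    ⟨_, Set.forall_mem_range.2 (h.norm_pgf_mul_exp_le hα0 hα1 hp0)⟩) z 0
  rw [pgf_zero, mul_zero, Complex.exp_zero, mul_one, RCLike.ofReal_eq_complex_ofReal] at hconst
  rw [← hconst, mul_assoc, ← Complex.exp_add]
  simp

theorem eq_poisson (h : HasConstantRate α p) (hα0 : 0 < α) (hα1 : α ≤ 1) (hp0 : ∀ n, 0 ≤ p n)
    (hp1 : HasSum p 1) (n : ℕ) : p n = α * (-Real.log α) ^ n / n ! := by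
  have hp00 : p 0 = α := by
    have h0 := (h 0).unique (by simpa using hp1)
    rwa [div_eq_one_iff_eq hα0.ne'] at h0
  have hμ : 0 ≤ -Real.log α := neg_nonneg.2 (Real.log_nonpos hα0.le hα1)
  have hexp (z : ℂ) : HasSum (fun n => ((α * (-Real.log α) ^ n / n ! : ℝ) : ℂ) * z ^ n)
      (α * Complex.exp (-Real.log α * z)) := by
    rw [Complex.exp_eq_exp_ℂ]
    refine ((NormedSpace.expSeries_div_hasSum_exp _).mul_left (α : ℂ)).congr_fun fun n => ?_
    push_cast
    ring
  have hcoeff := FormalMultilinearSeries.coeff_eq_of_tsum_mul_pow_eq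
    (c := fun n => (p n : ℂ)) (d := fun n => ((α * (-Real.log α) ^ n / n ! : ℝ) : ℂ))
    (fun r => by simpa [abs_of_nonneg (hp0 _)] using h.summable_mul_pow hp0 r)
    (fun r => by
      refine ((Real.summable_pow_div_factorial (-Real.log α * r)).mul_left α).congr fun n => ?_
      rw [Complex.norm_real, Real.norm_of_nonneg (by positivity)]
      ring)
    (fun z => by
      have hz := h.pgf_eq_mul_exp hα0 hα1 hp0 z
      rw [hp00] at hz
      rw [(hexp z).tsum_eq]
      exact hz)
  exact_mod_cast congrFun hcoeff n

end HasConstantRate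

lemma hasConstantRate_poisson {α : ℝ} (hα0 : 0 < α) :
    HasConstantRate α fun n => α * (-Real.log α) ^ n / n ! := fun n => by
  have hαμ : α * Real.exp (-Real.log α) = 1 := by
    rw [Real.exp_neg, Real.exp_log hα0, mul_inv_cancel₀ hα0.ne']
  have hval : α * ((-Real.log α) ^ n / n ! * Real.exp (-Real.log α))
      = α * (-Real.log α) ^ n / n ! / α := by
    field_simp
    linear_combination (-Real.log α) ^ n * hαμ
  rw [← hval]
  exact ((hasSum_choose_mul_pow_div_factorial (-Real.log α) n).mul_left α).congr_fun
    fun j => by ring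

/-- Let `α ∈ (0,1)` and let `p` be a probability mass function on
`ℕ`. Then `p` satisfies `p_n = α ∑_j C(j,n) p_j` for every `n` (with all these sums
finite) if and only if `p` is the Poisson distribution with mean `μ = −ln α`, i.e.
`p_n = α (−ln α)ⁿ / n!` for all `n`. -/
theorem rao_rubin_poisson_characterization
    (α : ℝ) (hα0 : 0 < α) (hα1 : α < 1)
    (p : ℕ → ℝ) (hp0 : ∀ n : ℕ, 0 ≤ p n) (hp1 : HasSum p 1) :
    ((∀ n : ℕ, Summable (fun j : ℕ => (j.choose n : ℝ) * p j)) ∧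
      (∀ n : ℕ, p n = α * ∑' j : ℕ, (j.choose n : ℝ) * p j))
    ↔
    (∀ n : ℕ, p n = α * (-Real.log α) ^ n / (n.factorial : ℝ)) := by
  have hrate : ((∀ n : ℕ, Summable (fun j : ℕ => (j.choose n : ℝ) * p j)) ∧
      (∀ n : ℕ, p n = α * ∑' j : ℕ, (j.choose n : ℝ) * p j)) ↔ HasConstantRate α p := by
    simp only [HasConstantRate, ← forall_and, summable_and_eq_mul_tsum_iff_hasSum hα0.ne']
  rw [hrate]
  refine ⟨fun h => h.eq_poisson hα0 hα1.le hp0 hp1, fun hpois => ?_⟩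
  rw [show p = _ from funext hpois]
  exact hasConstantRate_poisson hα0
end
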